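/- Let T ∈ G be hyperbolic. Then there exists S ∈ G such that S ∘ T ∘ S⁻¹ is a normal operator on the Hilbert space H ⊕ ℂ that is not unitary. -/

import Mathlib

noncomputable section

variable {H : Type*} [NormedAddCommGroup H] [InnerProductSpace ℂ H] [CompleteSpace H]

/-- The Hermitian form `A((x,z),(y,w)) = ⟨x,y⟩ - z·conj w` on `H ⊕ ℂ`, linear in the
first argument (the paper's convention); `⟨x,y⟩` (linear in `x`) is `inner y x` in Mathlib. -/
def formA (u v : H × ℂ) : ℂ :=
  (inner ℂ v.1 u.1 : ℂ) - u.2 * (starRingEnd ℂ) v.2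

/-- The standard inner product of the Hilbert space `H ⊕ ℂ`, linear in the first argument. -/
def ipStd (u v : H × ℂ) : ℂ :=
  (inner ℂ v.1 u.1 : ℂ) + u.2 * (starRingEnd ℂ) v.2

/-- Membership in the group `G` of bounded bijective linear maps preserving `A`. -/
def memG (T : (H × ℂ) →L[ℂ] (H × ℂ)) : Prop :=
  Function.Bijective T ∧ ∀ u v : H × ℂ, formA (T u) (T v) = formA u v

/-- `T` is elliptic: it has an eigenvector `(x,1)` with `‖x‖ < 1`. -/
def IsEllipticG (T : (H × ℂ) →L[ℂ] (H × ℂ)) : Prop :=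
  ∃ x : H, ‖x‖ < 1 ∧ ∃ μ : ℂ, T (x, 1) = μ • ((x, 1) : H × ℂ)

/-- Points `x` of the closed unit ball with `(x,1)` an eigenvector of `T`. -/
def fixedBall (T : (H × ℂ) →L[ℂ] (H × ℂ)) : Set H :=
  {x : H | ‖x‖ ≤ 1 ∧ ∃ μ : ℂ, T (x, 1) = μ • ((x, 1) : H × ℂ)}

/-- `T` is hyperbolic: not elliptic, with exactly two fixed points in the closed ball. -/
def IsHyperbolicG (T : (H × ℂ) →L[ℂ] (H × ℂ)) : Prop :=
  ¬ IsEllipticG T ∧ ∃ x y : H, x ≠ y ∧ fixedBall T = {x, y}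

/-- `T` is parabolic: not elliptic, with exactly one fixed point in the closed ball. -/
def IsParabolicG (T : (H × ℂ) →L[ℂ] (H × ℂ)) : Prop :=
  ¬ IsEllipticG T ∧ ∃ x : H, fixedBall T = {x}

/-- `M†`, the `A`-orthogonal complement of a subspace `M` of `H ⊕ ℂ`. -/
def daggerA (M : Submodule ℂ (H × ℂ)) : Submodule ℂ (H × ℂ) where
  carrier := {v | ∀ m ∈ M, formA v m = 0}
  add_mem' := by
    intro a b ha hb m hm
    have h1 := ha m hm
    have h2 := hb m hm
    simp only [formA, Prod.fst_add, Prod.snd_add, inner_add_right, add_mul] at *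
    linear_combination h1 + h2
  zero_mem' := by
    intro m hm
    simp [formA]
  smul_mem' := by
    intro c a ha m hm
    have h1 := ha m hm
    simp only [formA, Prod.smul_fst, Prod.smul_snd, inner_smul_right, smul_eq_mul] at *
    linear_combination c * h1

/-- The norm induced by `A` on a subspace where `A` is positive. -/
def nA (v : H × ℂ) : ℝ := Real.sqrt (formA v v).re

/-- Sequential completeness of a subspace for the norm induced by `A`. -/
def CompleteForA (M : Submodule ℂ (H × ℂ)) : Prop :=
  ∀ f : ℕ → H × ℂ, (∀ n, f n ∈ M) →
    (∀ ε : ℝ, 0 < ε → ∃ N : ℕ, ∀ m n : ℕ, N ≤ m → N ≤ n → nA (f m - f n) < ε) →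
    ∃ v ∈ M, ∀ ε : ℝ, 0 < ε → ∃ N : ℕ, ∀ n : ℕ, N ≤ n → nA (f n - v) < ε

end

/-! A hyperbolic `T` has eigenvectors `(x, 1)`, `(y, 1)` on the light cone of `formA`, with
eigenvalues `μ`, `ν` satisfying `μ * conj ν = 1` and `‖μ‖ ≠ 1` (otherwise `μ = ν` and the midpoint
of `x` and `y` would be an elliptic fixed point). One `formA`-reflection moves the timelike unit
vector of their span to the `ℂ`-axis; afterwards the two fixed points are antipodal, `±e`.
For `R ∈ G` the Hilbert adjoint is `J R⁻¹ J`, where `J = fundSymm` negates `ℂ`. Now `J` swaps the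
eigenlines of `±e` and fixes their `formA`-orthogonal complement, which `R` and `R⁻¹` preserve,
so `R` commutes with its adjoint; and `R (e, 1) = μ • (e, 1)` with `‖μ‖ ≠ 1` is not unitary. -/

noncomputable section

open ContinuousLinearMap ComplexConjugate

variable {H : Type*} [NormedAddCommGroup H] [InnerProductSpace ℂ H]

section FormA

@[simp] lemma formA_add_left (u v w : H × ℂ) : formA (u + v) w = formA u w + formA v w := by
  simp only [formA, Prod.fst_add, Prod.snd_add, inner_add_right]; ring

@[simp] lemma formA_sub_left (u v w : H × ℂ) : formA (u - v) w = formA u w - formA v w := by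
  simp only [formA, Prod.fst_sub, Prod.snd_sub, inner_sub_right]; ring

@[simp] lemma formA_smul_left (z : ℂ) (u w : H × ℂ) : formA (z • u) w = z * formA u w := by
  simp only [formA, Prod.smul_fst, Prod.smul_snd, inner_smul_right, smul_eq_mul]; ring

@[simp] lemma formA_add_right (u v w : H × ℂ) : formA u (v + w) = formA u v + formA u w := by
  simp only [formA, Prod.fst_add, Prod.snd_add, inner_add_left, map_add]; ring

@[simp] lemma formA_sub_right (u v w : H × ℂ) : formA u (v - w) = formA u v - formA u w := by
  simp only [formA, Prod.fst_sub, Prod.snd_sub, inner_sub_left, map_sub]; ring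

@[simp] lemma formA_smul_right (z : ℂ) (u w : H × ℂ) : formA u (z • w) = conj z * formA u w := by
  simp only [formA, Prod.smul_fst, Prod.smul_snd, inner_smul_left, smul_eq_mul, map_mul]; ring

lemma conj_formA (u v : H × ℂ) : conj (formA u v) = formA v u := by
  simp only [formA, map_sub, map_mul, inner_conj_symm, Complex.conj_conj]; ring

lemma formA_pair (x y : H) (z w : ℂ) : formA (x, z) (y, w) = inner ℂ y x - z * conj w := rfl

def formAFunctional (a : H × ℂ) : (H × ℂ) →L[ℂ] ℂ :=
  (innerSL ℂ a.1).comp (fst ℂ H ℂ) - conj a.2 • snd ℂ H ℂ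

@[simp] lemma formAFunctional_apply (a v : H × ℂ) : formAFunctional a v = formA v a := by
  simp [formAFunctional, formA, mul_comm]

lemma formA_self (v : H × ℂ) : formA v v = ((‖v.1‖ ^ 2 - ‖v.2‖ ^ 2 : ℝ) : ℂ) := by
  simp [formA, Complex.mul_conj, Complex.normSq_eq_norm_sq]

end FormA

lemma ContinuousLinearEquiv.symm_apply_eq_inv_smul {K M : Type*} [Field K] [AddCommGroup M]
    [Module K M] [TopologicalSpace M] (R : M ≃L[K] M) {a : M} {μ : K} (ha : a ≠ 0)
    (h : R a = μ • a) : R.symm a = μ⁻¹ • a := by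
  have hμ : μ ≠ 0 := by
    rintro rfl
    exact ha (R.injective (by rw [h, zero_smul, map_zero]))
  rw [R.symm_apply_eq, map_smul, h, smul_smul, inv_mul_cancel₀ hμ, one_smul]

section GroupG

variable {R : (H × ℂ) ≃L[ℂ] (H × ℂ)}

lemma memG.formA_apply (hR : memG (R : (H × ℂ) →L[ℂ] (H × ℂ))) (u v : H × ℂ) :
    formA (R u) (R v) = formA u v :=
  hR.2 u v

lemma memG_of_formA (hR : ∀ u v, formA (R u) (R v) = formA u v) :
    memG (R : (H × ℂ) →L[ℂ] (H × ℂ)) :=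
  ⟨R.bijective, hR⟩

lemma memG.symm (hR : memG (R : (H × ℂ) →L[ℂ] (H × ℂ))) :
    memG (R.symm : (H × ℂ) →L[ℂ] (H × ℂ)) :=
  memG_of_formA fun u v ↦ by
    rw [← hR.formA_apply, R.apply_symm_apply, R.apply_symm_apply]

lemma memG.trans {S : (H × ℂ) ≃L[ℂ] (H × ℂ)} (hR : memG (R : (H × ℂ) →L[ℂ] (H × ℂ)))
    (hS : memG (S : (H × ℂ) →L[ℂ] (H × ℂ))) :
    memG ((R.trans S : (H × ℂ) ≃L[ℂ] (H × ℂ)) : (H × ℂ) →L[ℂ] (H × ℂ)) :=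
  memG_of_formA fun u v ↦ by
    rw [R.trans_apply, R.trans_apply, hS.formA_apply, hR.formA_apply]

lemma conj_apply_of_apply_eq_smul {S : (H × ℂ) ≃L[ℂ] (H × ℂ)} {T : (H × ℂ) →L[ℂ] (H × ℂ)}
    {u a : H × ℂ} {α μ : ℂ} (hα : α ≠ 0) (hSu : S u = α • a) (hTu : T u = μ • u) :
    S (T (S.symm a)) = μ • a := by
  have h : S.symm a = α⁻¹ • u := by
    rw [S.symm_apply_eq, map_smul, hSu, smul_smul, inv_mul_cancel₀ hα, one_smul]
  rw [h, map_smul, hTu, smul_smul, map_smul, hSu, smul_smul]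
  congr 1
  field_simp

end GroupG

section FundSymm

def fundSymm : (H × ℂ) →L[ℂ] (H × ℂ) := (fst ℂ H ℂ).prod (-snd ℂ H ℂ)

@[simp] lemma fundSymm_apply (v : H × ℂ) : fundSymm v = (v.1, -v.2) := rfl

@[simp] lemma fundSymm_fundSymm (v : H × ℂ) : fundSymm (fundSymm v) = v := by simp

lemma ipStd_eq_formA_fundSymm (u v : H × ℂ) : ipStd u (fundSymm v) = formA u v := by
  simp [ipStd, formA, sub_eq_add_neg]

def adjointG (R : (H × ℂ) ≃L[ℂ] (H × ℂ)) : (H × ℂ) →L[ℂ] (H × ℂ) :=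
  fundSymm ∘L (R.symm : (H × ℂ) →L[ℂ] (H × ℂ)) ∘L fundSymm

lemma adjointG_apply (R : (H × ℂ) ≃L[ℂ] (H × ℂ)) (v : H × ℂ) :
    adjointG R v = fundSymm (R.symm (fundSymm v)) := rfl

variable {R : (H × ℂ) ≃L[ℂ] (H × ℂ)}

lemma ipStd_apply_left (hR : memG (R : (H × ℂ) →L[ℂ] (H × ℂ))) (u v : H × ℂ) :
    ipStd (R u) v = ipStd u (adjointG R v) := by
  rw [adjointG_apply, ipStd_eq_formA_fundSymm, ← hR.formA_apply, R.apply_symm_apply,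
    ← ipStd_eq_formA_fundSymm, fundSymm_fundSymm]

end FundSymm

section Reflection

/-- When `formA a a = 0` the junk value `2 / 0 = 0` makes this the identity, so `reflA a ∈ G`
for every `a`. -/
def reflA (a : H × ℂ) : (H × ℂ) →L[ℂ] (H × ℂ) :=
  ContinuousLinearMap.id ℂ (H × ℂ) - ((2 / formA a a) • formAFunctional a).smulRight a

lemma reflA_apply (a v : H × ℂ) : reflA a v = v - (2 / formA a a * formA v a) • a := by
  simp [reflA]

lemma formA_reflA (a u v : H × ℂ) : formA (reflA a u) (reflA a v) = formA u v := by
  have hN := conj_formA a a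
  simp only [reflA_apply, formA_sub_left, formA_sub_right, formA_smul_left, formA_smul_right,
    map_mul, map_div₀, hN, conj_formA, map_ofNat]
  rcases eq_or_ne (formA a a) 0 with h | h
  · simp [h]
  · field_simp
    ring

lemma reflA_reflA (a v : H × ℂ) : reflA a (reflA a v) = v := by
  rcases eq_or_ne (formA a a) 0 with h | h
  · simp [reflA_apply, h]
  · have hv : formA (reflA a v) a = - formA v a := by
      rw [reflA_apply, formA_sub_left, formA_smul_left]
      field_simp
      ring
    rw [reflA_apply (v := reflA a v), hv, reflA_apply]
    module

lemma reflA_sub_apply {p q : H × ℂ} (hpq : formA p q = formA q p)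
    (hp : formA p p = formA q q) (hne : formA (p - q) (p - q) ≠ 0) : reflA (p - q) p = q := by
  have hN : formA (p - q) (p - q) = 2 * (formA p p - formA p q) := by
    simp only [formA_sub_left, formA_sub_right]; rw [← hpq, ← hp]; ring
  have hcoef : 2 / formA (p - q) (p - q) * formA p (p - q) = 1 := by
    have hne' : formA p p - formA p q ≠ 0 := right_ne_zero_of_mul (hN ▸ hne)
    rw [hN, formA_sub_right]
    field_simp
  rw [reflA_apply, hcoef, one_smul, sub_sub_cancel]

def reflAEquiv (a : H × ℂ) : (H × ℂ) ≃L[ℂ] (H × ℂ) :=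
  ContinuousLinearEquiv.equivOfInverse (reflA a) (reflA a) (reflA_reflA a) (reflA_reflA a)

lemma memG_reflAEquiv (a : H × ℂ) : memG ((reflAEquiv a : (H × ℂ) ≃L[ℂ] (H × ℂ)) :
    (H × ℂ) →L[ℂ] (H × ℂ)) :=
  memG_of_formA (formA_reflA a)

end Reflection

section NormalForm

lemma exists_memG_apply_eq_zero_prod {p : H × ℂ} (hp : formA p p = -1) :
    ∃ S : (H × ℂ) ≃L[ℂ] (H × ℂ), memG (S : (H × ℂ) →L[ℂ] (H × ℂ)) ∧ ∃ z : ℂ, S p = (0, z) := by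
  by_cases hp1 : p.1 = 0
  · exact ⟨ContinuousLinearEquiv.refl ℂ _, memG_of_formA fun _ _ ↦ rfl, p.2, Prod.ext hp1 rfl⟩
  have hnorm : ‖p.2‖ ^ 2 = 1 + ‖p.1‖ ^ 2 := by
    rw [formA_self] at hp
    have h : ‖p.1‖ ^ 2 - ‖p.2‖ ^ 2 = -1 := by exact_mod_cast hp
    linarith
  have hr : 1 < ‖p.2‖ := by
    have : 0 < ‖p.1‖ := norm_pos_iff.mpr hp1
    nlinarith [norm_nonneg p.2]
  set r := ‖p.2‖
  have hr0 : (r : ℂ) ≠ 0 := by exact_mod_cast (show r ≠ 0 by linarith)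
  have hpp : p.2 * conj p.2 = (r : ℂ) ^ 2 := by
    rw [Complex.mul_conj, Complex.normSq_eq_norm_sq]; push_cast; rfl
  -- the phase of `q` makes `formA p q` real, so that the reflection along `p - q` swaps `p`, `q`
  set q : H × ℂ := (0, p.2 / r)
  have hqq : formA q q = -1 := by
    simp only [q, formA_pair, inner_zero_left, map_div₀, Complex.conj_ofReal]
    field_simp
    rw [hpp]
    ring
  have hpq : formA p q = -r := by
    simp only [q, formA, inner_zero_left, map_div₀, Complex.conj_ofReal]
    field_simp
    rw [hpp]
    ring
  have hqp : formA q p = -r := by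
    rw [← conj_formA, hpq, map_neg, Complex.conj_ofReal]
  have hne : formA (p - q) (p - q) ≠ 0 := by
    simp only [formA_sub_left, formA_sub_right, hpq, hqp, hqq, hp]
    intro h
    have : (r : ℂ) = 1 := by linear_combination h / 2
    exact_mod_cast hr.ne' (by exact_mod_cast this)
  refine ⟨reflAEquiv (p - q), memG_reflAEquiv _, p.2 / r, ?_⟩
  exact reflA_sub_apply (hpq.trans hqp.symm) (hp.trans hqq.symm) hne

lemma exists_apply_eq_prod_zero_of_formA {S : (H × ℂ) ≃L[ℂ] (H × ℂ)}
    (hS : memG (S : (H × ℂ) →L[ℂ] (H × ℂ))) {p f : H × ℂ} {z : ℂ} (hSp : S p = (0, z))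
    (hp : formA p p = -1) (hf : formA f f = 1) (hfp : formA f p = 0) :
    ‖z‖ = 1 ∧ ∃ k : H, ‖k‖ = 1 ∧ S f = (k, 0) := by
  have hz : ‖z‖ = 1 := by
    rw [← hS.formA_apply, hSp, formA_self] at hp
    have h : ‖(0 : H)‖ ^ 2 - ‖z‖ ^ 2 = -1 := by exact_mod_cast hp
    rw [norm_zero] at h
    nlinarith [norm_nonneg z]
  have hf2 : (S f).2 = 0 := by
    rw [← hS.formA_apply, hSp] at hfp
    simp only [formA, inner_zero_left, zero_sub, neg_eq_zero, mul_eq_zero, map_eq_zero] at hfp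
    exact hfp.resolve_right (norm_ne_zero_iff.mp (by rw [hz]; norm_num))
  refine ⟨hz, (S f).1, ?_, Prod.ext rfl hf2⟩
  rw [← hS.formA_apply, formA_self, hf2, norm_zero] at hf
  have h : ‖(S f).1‖ ^ 2 - 0 ^ 2 = 1 := by exact_mod_cast hf
  nlinarith [norm_nonneg (S f).1]

lemma formA_orthonormal_of_null {u w : H × ℂ} (hu : formA u u = 0) (hw : formA w w = 0)
    {t : ℂ} (ht : t * conj (formA u w) = 2⁻¹) :
    formA (u - t • w) (u - t • w) = -1 ∧ formA (u + t • w) (u + t • w) = 1 ∧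
      formA (u + t • w) (u - t • w) = 0 := by
  have ht' : conj t * formA u w = 2⁻¹ := by
    rw [← Complex.conj_conj (formA u w), ← map_mul, ht, map_inv₀, map_ofNat]
  have hwu : formA w u = conj (formA u w) := (conj_formA u w).symm
  simp only [formA_add_left, formA_sub_left, formA_add_right, formA_sub_right, formA_smul_left,
    formA_smul_right, hu, hw, hwu]
  exact ⟨by linear_combination -ht - ht', by linear_combination ht + ht',
    by linear_combination ht - ht'⟩

lemma exists_memG_apply_eq_antipodal {u w : H × ℂ} (hu : formA u u = 0) (hw : formA w w = 0)
    (huw : formA u w ≠ 0) :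
    ∃ S : (H × ℂ) ≃L[ℂ] (H × ℂ), memG (S : (H × ℂ) →L[ℂ] (H × ℂ)) ∧ ∃ e : H, ‖e‖ = 1 ∧
      ∃ α β : ℂ, α ≠ 0 ∧ β ≠ 0 ∧ S u = α • ((e, 1) : H × ℂ) ∧ S w = β • ((-e, 1) : H × ℂ) := by
  set c := formA u w
  set t := (2 * conj c)⁻¹
  have htc : t * conj c = 2⁻¹ := by
    have : conj c ≠ 0 := (map_ne_zero _).mpr huw
    simp only [t]
    field_simp
  obtain ⟨hp, hf, hfp⟩ := formA_orthonormal_of_null hu hw htc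
  set p := u - t • w
  set f := u + t • w
  obtain ⟨S, hS, z, hSp⟩ := exists_memG_apply_eq_zero_prod hp
  obtain ⟨hz, k, hk, hSf⟩ := exists_apply_eq_prod_zero_of_formA hS hSp hp hf hfp
  have hz0 : z ≠ 0 := norm_ne_zero_iff.mp (by rw [hz]; norm_num)
  refine ⟨S, hS, z⁻¹ • k, by rw [norm_smul, norm_inv, hz, hk]; norm_num,
    z / 2, -(conj c * z), by simpa using hz0, by simpa [c] using ⟨huw, hz0⟩, ?_, ?_⟩
  · have hu' : u = (2 : ℂ)⁻¹ • (p + f) := by simp only [p, f]; module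
    rw [hu', map_smul, map_add, hSp, hSf]
    ext
    · simp only [Prod.smul_fst, Prod.fst_add, zero_add, smul_smul]
      congr 1
      field_simp
    · simp only [Prod.smul_snd, Prod.snd_add, add_zero, smul_eq_mul]
      ring
  · have hw' : w = conj c • (f - p) := by
      rw [show f - p = (2 * t) • w by simp only [p, f]; module, smul_smul,
        show conj c * (2 * t) = 1 by linear_combination 2 * htc, one_smul]
    rw [hw', map_smul, map_sub, hSp, hSf]
    ext
    · simp [smul_smul, hz0]
    · simp only [Prod.smul_snd, Prod.snd_sub, zero_sub, smul_eq_mul]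
      ring

end NormalForm

section Hyperbolic

variable {T : (H × ℂ) →L[ℂ] (H × ℂ)}

lemma norm_eq_one_of_mem_fixedBall (hT : ¬ IsEllipticG T) {x : H} (hx : x ∈ fixedBall T) :
    ‖x‖ = 1 :=
  hx.1.eq_of_not_lt fun h ↦ hT ⟨x, h, hx.2⟩

lemma formA_self_of_norm_eq_one {x : H} (hx : ‖x‖ = 1) : formA ((x, 1) : H × ℂ) (x, 1) = 0 := by
  simp [formA_self, hx]

lemma formA_ne_zero_of_ne {x y : H} (hx : ‖x‖ = 1) (hy : ‖y‖ = 1) (hxy : x ≠ y) :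
    formA ((x, 1) : H × ℂ) (y, 1) ≠ 0 := by
  rw [formA_pair, map_one, mul_one, sub_ne_zero]
  exact fun h ↦ hxy ((inner_eq_one_iff_of_norm_eq_one hy hx).mp h).symm

lemma mul_conj_eq_one_of_apply_eq_smul (hT : memG T) {u w : H × ℂ} {μ ν : ℂ}
    (hu : T u = μ • u) (hw : T w = ν • w) (huw : formA u w ≠ 0) : μ * conj ν = 1 := by
  have h := hT.2 u w
  rw [hu, hw, formA_smul_left, formA_smul_right, ← mul_assoc] at h
  exact (mul_eq_right₀ huw).mp h

/-- If the eigenvalues at two distinct points of the sphere were unimodular they would coincide,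
and the midpoint would be a fixed point inside the ball. -/
lemma norm_ne_one_of_apply_eq_smul (hT : ¬ IsEllipticG T) {x y : H} (hx : ‖x‖ = 1)
    (hy : ‖y‖ = 1) (hxy : x ≠ y) {μ ν : ℂ} (hTx : T (x, 1) = μ • ((x, 1) : H × ℂ))
    (hTy : T (y, 1) = ν • ((y, 1) : H × ℂ)) (hμν : μ * conj ν = 1) : ‖μ‖ ≠ 1 := by
  intro hμ
  have hνμ : ν = μ := by
    have hμ0 : μ ≠ 0 := left_ne_zero_of_mul_eq_one hμν
    have h : μ * conj ν = μ * conj μ := by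
      rw [hμν, Complex.mul_conj, Complex.normSq_eq_norm_sq, hμ]; norm_num
    exact (RingHom.injective _) (mul_left_cancel₀ hμ0 h)
  have hmid : ‖(2⁻¹ : ℂ) • (x + y)‖ < 1 := by
    have hpar := parallelogram_law_with_norm ℂ x y
    have hsub : 0 < ‖x - y‖ := norm_pos_iff.mpr (sub_ne_zero.mpr hxy)
    rw [hx, hy] at hpar
    rw [norm_smul, norm_inv, Complex.norm_two]
    nlinarith [norm_nonneg (x + y)]
  refine hT ⟨(2⁻¹ : ℂ) • (x + y), hmid, μ, ?_⟩
  have hpair : (((2⁻¹ : ℂ) • (x + y), 1) : H × ℂ) = (2⁻¹ : ℂ) • (((x, 1) : H × ℂ) + (y, 1)) := by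
    ext <;> norm_num
  rw [hpair, map_smul, map_add, hTx, hTy, hνμ, ← smul_add, smul_comm]

lemma IsHyperbolicG.exists_null_eigenvectors (hT : memG T) (hhyp : IsHyperbolicG T) :
    ∃ u w : H × ℂ, formA u u = 0 ∧ formA w w = 0 ∧ formA u w ≠ 0 ∧
      ∃ μ ν : ℂ, ‖μ‖ ≠ 1 ∧ T u = μ • u ∧ T w = ν • w := by
  obtain ⟨hell, x, y, hxy, hfix⟩ := hhyp
  have hxmem : x ∈ fixedBall T := hfix ▸ Set.mem_insert x {y}
  have hymem : y ∈ fixedBall T := hfix ▸ Set.mem_insert_of_mem x rfl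
  obtain ⟨μ, hTx⟩ := hxmem.2
  obtain ⟨ν, hTy⟩ := hymem.2
  have hx := norm_eq_one_of_mem_fixedBall hell hxmem
  have hy := norm_eq_one_of_mem_fixedBall hell hymem
  have hne := formA_ne_zero_of_ne hx hy hxy
  refine ⟨_, _, formA_self_of_norm_eq_one hx, formA_self_of_norm_eq_one hy, hne, μ, ν,
    norm_ne_one_of_apply_eq_smul hell hx hy hxy hTx hTy ?_, hTx, hTy⟩
  exact mul_conj_eq_one_of_apply_eq_smul hT hTx hTy hne

end Hyperbolic

section Antipodal

variable {e : H}

lemma exists_eq_add_of_norm_eq_one (he : ‖e‖ = 1) (v : H × ℂ) :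
    ∃ α β : ℂ, ∃ n : H × ℂ, formA n (e, 1) = 0 ∧ formA n (-e, 1) = 0 ∧
      v = α • ((e, 1) : H × ℂ) + β • (-e, 1) + n := by
  refine ⟨(v.2 + inner ℂ e v.1) / 2, (v.2 - inner ℂ e v.1) / 2, (v.1 - inner ℂ e v.1 • e, 0),
    ?_, ?_, ?_⟩
  · simp [formA, he]
  · simp [formA, he]
  · ext
    · simp only [Prod.fst_add, Prod.smul_fst]
      module
    · simp only [Prod.snd_add, Prod.smul_snd, smul_eq_mul]
      ring

lemma fundSymm_eq_self_of_formA (n : H × ℂ) (h₁ : formA n (e, 1) = 0)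
    (h₂ : formA n (-e, 1) = 0) : fundSymm n = n := by
  have h : n.2 = 0 := by
    have := congrArg₂ (· + ·) h₁ h₂
    simp only [formA, inner_neg_left, map_one, mul_one] at this
    linear_combination -this / 2
  ext <;> simp [h]

variable {R : (H × ℂ) ≃L[ℂ] (H × ℂ)}

lemma formA_apply_eq_zero_of_symm_apply (hR : memG (R : (H × ℂ) →L[ℂ] (H × ℂ)))
    {a n : H × ℂ} {μ : ℂ} (ha : R.symm a = μ • a) (hn : formA n a = 0) : formA (R n) a = 0 := by
  rw [← R.apply_symm_apply a, hR.formA_apply, ha, formA_smul_right, hn, mul_zero]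

lemma adjointG_comp_eq_comp_adjointG (hR : memG (R : (H × ℂ) →L[ℂ] (H × ℂ))) (he : ‖e‖ = 1)
    {μ ν : ℂ} (hμ : R (e, 1) = μ • ((e, 1) : H × ℂ)) (hν : R (-e, 1) = ν • ((-e, 1) : H × ℂ)) :
    adjointG R ∘L (R : (H × ℂ) →L[ℂ] (H × ℂ)) = (R : (H × ℂ) →L[ℂ] (H × ℂ)) ∘L adjointG R := by
  have hμ' := R.symm_apply_eq_inv_smul (by simp) hμ
  have hν' := R.symm_apply_eq_inv_smul (by simp) hν
  have hμ'' : R.symm.symm (e, 1) = μ • ((e, 1) : H × ℂ) := hμ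
  have hν'' : R.symm.symm (-e, 1) = ν • ((-e, 1) : H × ℂ) := hν
  have hJa : fundSymm ((e, 1) : H × ℂ) = -(-e, 1) := by simp
  have hJb : fundSymm ((-e, 1) : H × ℂ) = -(e, 1) := by simp
  refine ContinuousLinearMap.ext fun v ↦ ?_
  obtain ⟨α, β, n, h₁, h₂, rfl⟩ := exists_eq_add_of_norm_eq_one he v
  have hJn := fundSymm_eq_self_of_formA n h₁ h₂
  have hJRn := fundSymm_eq_self_of_formA (R n) (formA_apply_eq_zero_of_symm_apply hR hμ' h₁)
    (formA_apply_eq_zero_of_symm_apply hR hν' h₂)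
  have hJRn' := fundSymm_eq_self_of_formA (R.symm n)
    (formA_apply_eq_zero_of_symm_apply hR.symm hμ'' h₁)
    (formA_apply_eq_zero_of_symm_apply hR.symm hν'' h₂)
  simp only [ContinuousLinearMap.comp_apply, adjointG_apply, ContinuousLinearEquiv.coe_coe,
    map_add, map_smul, map_neg, hμ, hν, hμ', hν', hJa, hJb, hJn, hJRn, hJRn', smul_neg, neg_neg,
    R.symm_apply_apply, R.apply_symm_apply, smul_smul]
  rw [mul_comm ν⁻¹, mul_comm μ⁻¹]

end Antipodal

lemma not_forall_ipStd_apply {R : H × ℂ → H × ℂ} {e : H} (he : ‖e‖ = 1) {μ : ℂ}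
    (hμ : R (e, 1) = μ • ((e, 1) : H × ℂ)) (hμ1 : ‖μ‖ ≠ 1) :
    ¬ ∀ u v : H × ℂ, ipStd (R u) (R v) = ipStd u v := by
  intro h
  have h' := h (e, 1) (e, 1)
  simp only [hμ, ipStd, Prod.smul_fst, Prod.smul_snd, inner_smul_left, inner_smul_right,
    smul_eq_mul] at h'
  rw [inner_self_eq_norm_sq_to_K, he] at h'
  norm_num at h'
  have hμμ : μ * conj μ = 1 := by linear_combination h' / 2
  rw [Complex.mul_conj, Complex.normSq_eq_norm_sq] at hμμ
  exact hμ1 ((pow_eq_one_iff_of_nonneg (norm_nonneg μ) two_ne_zero).mp (by exact_mod_cast hμμ))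

end

section
variable {H : Type*} [NormedAddCommGroup H] [InnerProductSpace ℂ H] [CompleteSpace H]

/-- a hyperbolic `T ∈ G` is, up to conjugation in `G`, a normal
non-unitary operator of the Hilbert space `H ⊕ ℂ`. -/
theorem hyperbolic_conj_nonunitary_normal (T : (H × ℂ) →L[ℂ] (H × ℂ))
    (hT : memG T) (hhyp : IsHyperbolicG T) :
    ∃ S : (H × ℂ) ≃L[ℂ] (H × ℂ), memG (S : (H × ℂ) →L[ℂ] (H × ℂ)) ∧
      -- R = S ∘ T ∘ S⁻¹ is a normal operator: it admits a Hilbert-space adjoint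
      -- (w.r.t. the standard inner product of H ⊕ ℂ) commuting with it ...
      (∃ Radj : (H × ℂ) →L[ℂ] (H × ℂ),
        (∀ u v : H × ℂ,
          ipStd ((S.toContinuousLinearMap ∘L T ∘L S.symm.toContinuousLinearMap) u) v
            = ipStd u (Radj v)) ∧
        Radj ∘L (S.toContinuousLinearMap ∘L T ∘L S.symm.toContinuousLinearMap)
          = (S.toContinuousLinearMap ∘L T ∘L S.symm.toContinuousLinearMap) ∘L Radj) ∧
      -- ... but R is not unitary: it does not preserve the standard inner product
      ¬ (∀ u v : H × ℂ,
          ipStd ((S.toContinuousLinearMap ∘L T ∘L S.symm.toContinuousLinearMap) u)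
                ((S.toContinuousLinearMap ∘L T ∘L S.symm.toContinuousLinearMap) v)
            = ipStd u v) := by
  obtain ⟨u, w, hu, hw, huw, μ, ν, hμ1, hTu, hTw⟩ := hhyp.exists_null_eigenvectors hT
  obtain ⟨S, hS, e, he, α, β, hα, hβ, hSu, hSw⟩ := exists_memG_apply_eq_antipodal hu hw huw
  let Te := ContinuousLinearEquiv.ofBijective T (LinearMap.ker_eq_bot.mpr hT.1.1)
    (LinearMap.range_eq_top.mpr hT.1.2)
  let R := (S.symm.trans Te).trans S
  have hR : memG (R : (H × ℂ) →L[ℂ] (H × ℂ)) := (hS.symm.trans (memG_of_formA hT.2)).trans hS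
  have hRe := conj_apply_of_apply_eq_smul hα hSu hTu
  have hRe' := conj_apply_of_apply_eq_smul hβ hSw hTw
  exact ⟨S, hS, ⟨adjointG R, ipStd_apply_left hR, adjointG_comp_eq_comp_adjointG hR he hRe hRe'⟩,
    not_forall_ipStd_apply he hRe hμ1⟩

end
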